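/- Let N ≥ 1, M ≥ 3, K = N·M, and let P_1, …, P_N be pairwise disjoint subsets of Fin K with |P_j| = M for all j whose union is all of Fin K. Define f(w) = Σ_{j=1}^N ∏_{k ∈ P_j} w_k (operations in ZMod 2). If a nonempty subset S ⊆ Fin K intersects at least two of the blocks P_1, …, P_N, then its joint influence on f is strictly greater than 1/2^{M−1}: Inf_S(f) > 1/2^{M−1}. -/
import Mathlib


open Finset

/-- Indicator vector of a finite set of coordinates: `(𝟙_S)_k = 1` iff `k ∈ S`. -/
def indVec {K : ℕ} (S : Finset (Fin K)) : Fin K → ZMod 2 :=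
  fun k => if k ∈ S then 1 else 0

/-- Joint influence of the set `S` of coordinates on the Boolean function `f`:
the normalized count of inputs `w` for which flipping exactly the coordinates in `S`
changes the value of `f`. -/
def jointInf {K : ℕ} (S : Finset (Fin K)) (f : (Fin K → ZMod 2) → ZMod 2) : ℚ :=
  ((Finset.univ.filter fun w : Fin K → ZMod 2 => f (w + indVec S) ≠ f w).card : ℚ) / 2 ^ K

def chi : ZMod 2 → ℤ := fun x => if x = 1 then -1 else 1

lemma chi_add (a b : ZMod 2) : chi (a + b) = chi a * chi b := by revert a b; decide

lemma zmod2_one_of_ne_zero (x : ZMod 2) (h : x ≠ 0) : x = 1 := by revert x; decide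
lemma zmod2_zero_of_ne_one (x : ZMod 2) (h : x ≠ 1) : x = 0 := by revert x; decide

lemma chi_sum {ι : Type*} (s : Finset ι) (g : ι → ZMod 2) :
    chi (∑ j ∈ s, g j) = ∏ j ∈ s, chi (g j) := by
  induction s using Finset.cons_induction with
  | empty => simp [chi]
  | cons a s ha ih => rw [Finset.sum_cons, Finset.prod_cons, chi_add, ih]

lemma sum_chi_eq {α : Type*} [Fintype α] (h : α → ZMod 2) :
    ∑ a : α, chi (h a) =
      (Fintype.card α : ℤ) - 2 * (univ.filter fun a => h a = 1).card := by
  classical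
  rw [← Finset.sum_filter_add_sum_filter_not univ (fun a => h a = 1)]
  have h1 : ∑ a ∈ univ.filter (fun a => h a = 1), chi (h a)
      = -((univ.filter fun a => h a = 1).card : ℤ) := by
    have : ∀ a ∈ univ.filter (fun a => h a = 1), chi (h a) = -1 := by
      intro a ha
      simp only [mem_filter] at ha
      simp [chi, ha.2]
    rw [Finset.sum_congr rfl this, Finset.sum_const]
    simp
  have h2 : ∑ a ∈ univ.filter (fun a => ¬ h a = 1), chi (h a)
      = ((univ.filter fun a => ¬ h a = 1).card : ℤ) := by
    have : ∀ a ∈ univ.filter (fun a => ¬ h a = 1), chi (h a) = 1 := by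
      intro a ha
      simp only [mem_filter] at ha
      simp [chi, ha.2]
    rw [Finset.sum_congr rfl this, Finset.sum_const]
    simp
  rw [h1, h2]
  have := Finset.card_filter_add_card_filter_not (s := (univ : Finset α))
    (p := fun a => h a = 1)
  rw [Finset.card_univ] at this
  omega

lemma zmod2_ne_iff (a b : ZMod 2) : a ≠ b ↔ a + b = 1 := by revert a b; decide

lemma prod_eq_one_iff {ι : Type*} (s : Finset ι) (g : ι → ZMod 2) :
    ∏ k ∈ s, g k = 1 ↔ ∀ k ∈ s, g k = 1 := by
  constructor
  · intro h k hk
    by_contra hne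
    rw [Finset.prod_eq_zero hk (zmod2_zero_of_ne_one _ hne)] at h
    exact one_ne_zero h.symm
  · exact Finset.prod_eq_one

lemma zmod2_add_eq_one_iff (x y : ZMod 2) : x + y = 1 ↔ x = 1 + y := by revert x y; decide

lemma block_count {α : Type*} [Fintype α] [DecidableEq α] (t : α → ZMod 2)
    (ht : ∃ a, t a = 1) :
    (univ.filter fun v : α → ZMod 2 =>
      (∏ a, (v a + t a)) + ∏ a, v a = 1).card = 2 := by
  classical
  obtain ⟨a0, ha0⟩ := ht
  set v1 : α → ZMod 2 := fun _ => 1 with hv1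
  set v2 : α → ZMod 2 := fun a => 1 + t a with hv2
  have hne : v1 ≠ v2 := by
    intro h
    have h2 := congrFun h a0
    rw [hv1, hv2] at h2
    simp only [ha0] at h2
    exact absurd h2 (by decide)
  have hA : ∀ v : α → ZMod 2, (∏ a, (v a + t a)) = 1 ↔ v = v2 := by
    intro v
    rw [prod_eq_one_iff]
    constructor
    · intro h; funext a
      have h3 := (zmod2_add_eq_one_iff _ _).mp (h a (mem_univ a))
      rw [hv2]; exact h3
    · intro h a _
      rw [h, hv2]
      show (1 + t a) + t a = 1
      generalize t a = y; revert y; decide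
  have hB : ∀ v : α → ZMod 2, (∏ a, v a) = 1 ↔ v = v1 := by
    intro v
    rw [prod_eq_one_iff]
    constructor
    · intro h; funext a; exact h a (mem_univ a)
    · intro h a _; rw [h]
  have hset : (univ.filter fun v : α → ZMod 2 =>
      (∏ a, (v a + t a)) + ∏ a, v a = 1) = {v1, v2} := by
    ext v
    simp only [mem_filter, mem_univ, true_and, mem_insert, mem_singleton]
    constructor
    · intro h
      rcases eq_or_ne (∏ a, v a) 1 with h1 | h1
      · left; exact (hB v).mp h1
      · right
        apply (hA v).mp
        rw [zmod2_zero_of_ne_one _ h1, add_zero] at h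
        exact h
    · rintro (rfl | rfl)
      · have hB1 : (∏ a, v1 a) = 1 := (hB v1).mpr rfl
        have hA0 : (∏ a, (v1 a + t a)) = 0 := by
          apply zmod2_zero_of_ne_one
          intro h
          exact hne ((hA v1).mp h)
        rw [hA0, hB1, zero_add]
      · have hA1 : (∏ a, (v2 a + t a)) = 1 := (hA v2).mpr rfl
        have hB0 : (∏ a, v2 a) = 0 := by
          apply zmod2_zero_of_ne_one
          intro h
          exact hne.symm ((hB v2).mp h)
        rw [hA1, hB0, add_zero]
  rw [hset, Finset.card_insert_of_notMem (by simpa using hne), Finset.card_singleton]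

lemma block_sum {α : Type*} [Fintype α] [DecidableEq α] (t : α → ZMod 2)
    (ht : ∃ a, t a = 1) :
    ∑ v : α → ZMod 2, chi ((∏ a, (v a + t a)) + ∏ a, v a)
      = 2 ^ (Fintype.card α) - 4 := by
  rw [sum_chi_eq (fun v : α → ZMod 2 => (∏ a, (v a + t a)) + ∏ a, v a),
    block_count t ht, Fintype.card_fun]
  have : Fintype.card (ZMod 2) = 2 := by decide
  rw [this]
  push_cast
  ring

lemma block_sum_zero {α : Type*} [Fintype α] [DecidableEq α] (t : α → ZMod 2)
    (ht : ∀ a, t a = 0) :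
    ∑ v : α → ZMod 2, chi ((∏ a, (v a + t a)) + ∏ a, v a)
      = 2 ^ (Fintype.card α) := by
  have h : ∀ v : α → ZMod 2, ((∏ a, (v a + t a)) + ∏ a, v a) = 0 := by
    intro v
    have : (∏ a, (v a + t a)) = ∏ a, v a := by
      apply Finset.prod_congr rfl
      intro a _
      rw [ht a, add_zero]
    rw [this, CharTwo.add_self_eq_zero]
  simp only [h]
  rw [Finset.sum_const, Finset.card_univ, Fintype.card_fun]
  have : Fintype.card (ZMod 2) = 2 := by decide
  rw [this]
  simp [chi]

theorem stmt10 (N M K : ℕ) (hN : 1 ≤ N) (hM : 3 ≤ M) (hK : K = N * M)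
    (P : Fin N → Finset (Fin K))
    (hdisj : ∀ i j, i ≠ j → Disjoint (P i) (P j))
    (hcard : ∀ j, (P j).card = M)
    (hcover : (Finset.univ : Finset (Fin N)).biUnion P = Finset.univ)
    (f : (Fin K → ZMod 2) → ZMod 2)
    (hf : ∀ w, f w = ∑ j : Fin N, ∏ k ∈ P j, w k)
    (S : Finset (Fin K)) (hS : S.Nonempty)
    (htwo : ∃ i j : Fin N, i ≠ j ∧ (S ∩ P i).Nonempty ∧ (S ∩ P j).Nonempty) :
    jointInf S f > 1 / 2 ^ (M - 1) := by
  classical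
  -- block assignment
  have hmem : ∀ k : Fin K, ∃ j, k ∈ P j := by
    intro k
    have h : k ∈ (Finset.univ : Finset (Fin N)).biUnion P := by
      rw [hcover]; exact mem_univ k
    simpa using h
  choose blk hblk using hmem
  have huniq : ∀ (k : Fin K) (j : Fin N), k ∈ P j → blk k = j := by
    intro k j hkj
    by_contra hne
    exact (Finset.disjoint_left.mp (hdisj _ _ hne) (hblk k)) hkj
  -- difference functions
  set D : Fin N → (Fin K → ZMod 2) → ZMod 2 :=
    fun j w => (∏ k ∈ P j, (w k + indVec S k)) + ∏ k ∈ P j, w k with hD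
  have hflip : ∀ w : Fin K → ZMod 2,
      (f (w + indVec S) ≠ f w) ↔ (∑ j : Fin N, D j w) = 1 := by
    intro w
    rw [zmod2_ne_iff]
    have h1 : f (w + indVec S) = ∑ j : Fin N, ∏ k ∈ P j, (w k + indVec S k) := by
      rw [hf]; rfl
    rw [h1, hf w, ← Finset.sum_add_distrib]
  -- the count
  set c := (Finset.univ.filter fun w : Fin K → ZMod 2 => f (w + indVec S) ≠ f w).card with hc
  -- local difference functions
  set Dloc : ∀ j : Fin N, ((↥(P j) → ZMod 2)) → ZMod 2 :=
    fun j v => (∏ k : ↥(P j), (v k + indVec S k.1)) + ∏ k : ↥(P j), v k with hDloc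
  -- sign sum equals 2^K - 2c
  have h1 : ∑ w : Fin K → ZMod 2, chi (∑ j : Fin N, D j w) = (2:ℤ)^K - 2*c := by
    rw [sum_chi_eq (fun w : Fin K → ZMod 2 => ∑ j : Fin N, D j w)]
    have hcd : Fintype.card (Fin K → ZMod 2) = 2 ^ K := by
      rw [Fintype.card_fun]
      have h2 : Fintype.card (ZMod 2) = 2 := by decide
      rw [h2, Fintype.card_fin]
    rw [hcd]
    have hfilt : (Finset.univ.filter fun w : Fin K → ZMod 2 => (∑ j : Fin N, D j w) = 1)
        = (Finset.univ.filter fun w : Fin K → ZMod 2 => f (w + indVec S) ≠ f w) := by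
      apply Finset.filter_congr
      intro w _
      exact (hflip w).symm
    rw [hfilt]
    push_cast
    ring
  -- bijection
  set Φ : (∀ j : Fin N, (↥(P j) → ZMod 2)) → (Fin K → ZMod 2) :=
    fun u k => u (blk k) ⟨k, hblk k⟩ with hΦ
  have hPhi_eq : ∀ (u : ∀ j : Fin N, (↥(P j) → ZMod 2)) (j : Fin N) (k : Fin K)
      (hk : k ∈ P j), Φ u k = u j ⟨k, hk⟩ := by
    intro u j k hk
    have h := huniq k j hk
    subst h
    rfl
  have hbij : Function.Bijective Φ := by
    constructor
    · intro u u' h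
      funext j k
      have h1 := congrFun h k.1
      rw [hPhi_eq u j k.1 k.2, hPhi_eq u' j k.1 k.2] at h1
      exact h1
    · intro w
      exact ⟨fun j k => w k.1, rfl⟩
  -- factorization
  have hDPhi : ∀ (u : ∀ j : Fin N, (↥(P j) → ZMod 2)) (j : Fin N),
      D j (Φ u) = Dloc j (u j) := by
    intro u j
    rw [hD, hDloc]
    simp only [Finset.univ_eq_attach]
    congr 1
    · rw [← Finset.prod_attach (P j) (fun k => (Φ u k + indVec S k))]
      apply Finset.prod_congr rfl
      intro k _
      rw [hPhi_eq u j k.1 k.2]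
    · rw [← Finset.prod_attach (P j) (fun k => Φ u k)]
      apply Finset.prod_congr rfl
      intro k _
      rw [hPhi_eq u j k.1 k.2]
  have h3 : ∑ w : Fin K → ZMod 2, chi (∑ j : Fin N, D j w)
      = ∏ j : Fin N, ∑ v : (↥(P j) → ZMod 2), chi (Dloc j v) := by
    rw [← Function.Bijective.sum_comp hbij (fun w => chi (∑ j : Fin N, D j w))]
    have hstep : ∀ u : (∀ j : Fin N, (↥(P j) → ZMod 2)),
        chi (∑ j : Fin N, D j (Φ u)) = ∏ j : Fin N, chi (Dloc j (u j)) := by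
      intro u
      rw [chi_sum]
      exact Finset.prod_congr rfl (fun j _ => by rw [hDPhi])
    rw [Finset.sum_congr rfl (fun u _ => hstep u)]
    rw [Finset.prod_univ_sum]
    rw [Fintype.piFinset_univ]
  -- per-block sums
  set B := Finset.univ.filter (fun j : Fin N => (S ∩ P j).Nonempty) with hB
  set r := B.card with hr
  have hcardPj : ∀ j : Fin N, Fintype.card ↥(P j) = M := by
    intro j; rw [Fintype.card_coe, hcard]
  have hblock : ∀ j : Fin N, (∑ v : (↥(P j) → ZMod 2), chi (Dloc j v))
      = if (S ∩ P j).Nonempty then (2:ℤ)^M - 4 else 2^M := by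
    intro j
    split_ifs with h
    · obtain ⟨k0, hk0⟩ := h
      rw [Finset.mem_inter] at hk0
      have := block_sum (fun a : ↥(P j) => indVec S a.1)
        ⟨⟨k0, hk0.2⟩, by simp [indVec, hk0.1]⟩
      rw [hcardPj j] at this
      exact this
    · have hempty : ∀ a : ↥(P j), indVec S a.1 = 0 := by
        intro a
        have : a.1 ∉ S := by
          intro hmem
          exact h ⟨a.1, Finset.mem_inter.mpr ⟨hmem, a.2⟩⟩
        simp [indVec, this]
      have := block_sum_zero (fun a : ↥(P j) => indVec S a.1) hempty
      rw [hcardPj j] at this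
      exact this
  -- the product
  have hprod : (∏ j : Fin N, ∑ v : (↥(P j) → ZMod 2), chi (Dloc j v))
      = ((2:ℤ)^M - 4)^r * ((2:ℤ)^M)^(N - r) := by
    rw [Finset.prod_congr rfl (fun j _ => hblock j)]
    rw [← Finset.prod_filter_mul_prod_filter_not Finset.univ
      (fun j : Fin N => (S ∩ P j).Nonempty)]
    have e1 : ∏ j ∈ Finset.univ.filter (fun j : Fin N => (S ∩ P j).Nonempty),
        (if (S ∩ P j).Nonempty then (2:ℤ)^M - 4 else 2^M) = ((2:ℤ)^M - 4)^r := by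
      rw [Finset.prod_congr rfl (fun j hj => ?_), Finset.prod_const]
      simp only [Finset.mem_filter] at hj
      rw [if_pos hj.2]
    have e2 : ∏ j ∈ Finset.univ.filter (fun j : Fin N => ¬(S ∩ P j).Nonempty),
        (if (S ∩ P j).Nonempty then (2:ℤ)^M - 4 else 2^M) = ((2:ℤ)^M)^(N - r) := by
      rw [Finset.prod_congr rfl (fun j hj => ?_), Finset.prod_const]
      · congr 1
        rw [Finset.filter_not, Finset.card_sdiff_of_subset (Finset.filter_subset _ _),
          Finset.card_univ, Fintype.card_fin]
      · simp only [Finset.mem_filter] at hj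
        rw [if_neg hj.2]
    rw [e1, e2]
  -- key identity
  have hkey : (2:ℤ)^K - 2*c = ((2:ℤ)^M - 4)^r * ((2:ℤ)^M)^(N - r) := by
    rw [← h1, h3, hprod]
  -- bounds on r
  have hrN : r ≤ N := by
    rw [hr, hB]
    calc B.card ≤ (Finset.univ : Finset (Fin N)).card := Finset.card_filter_le _ _
    _ = N := by rw [Finset.card_univ, Fintype.card_fin]
  have hr2 : 2 ≤ r := by
    obtain ⟨i, j, hij, hi, hj⟩ := htwo
    have : 1 < B.card := Finset.one_lt_card.mpr
      ⟨i, by simp [hB, hi], j, by simp [hB, hj], hij⟩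
    rw [hr]
    omega
  -- arithmetic
  set X : ℤ := (2:ℤ)^M - 4 with hX
  have hXpos : 0 < X := by
    rw [hX]
    have : (2:ℤ)^3 ≤ 2^M := pow_le_pow_right₀ (by norm_num) hM
    norm_num at this ⊢
    omega
  have hXlt : X < 2^M := by rw [hX]; omega
  have hAbound : X^r * ((2:ℤ)^M)^(N - r) < ((2:ℤ)^M)^(N - 1) * X := by
    have hx1 : X^r = X^(r-1) * X := by
      conv_lhs => rw [show r = (r-1) + 1 by omega]
      rw [pow_succ]
    have hx2 : X^(r-1) < ((2:ℤ)^M)^(r-1) :=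
      pow_lt_pow_left₀ hXlt (le_of_lt hXpos) (by omega)
    calc X^r * ((2:ℤ)^M)^(N - r) = X^(r-1) * (X * ((2:ℤ)^M)^(N - r)) := by
          rw [hx1]; ring
      _ < ((2:ℤ)^M)^(r-1) * (X * ((2:ℤ)^M)^(N - r)) := by
          apply mul_lt_mul_of_pos_right hx2
          positivity
      _ = (((2:ℤ)^M)^(r-1) * ((2:ℤ)^M)^(N - r)) * X := by ring
      _ = ((2:ℤ)^M)^(N - 1) * X := by
          rw [← pow_add, show r - 1 + (N - r) = N - 1 by omega]
  have h2K : (2:ℤ)^K = ((2:ℤ)^M)^(N-1) * 2^M := by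
    rw [← pow_mul, ← pow_add]
    congr 1
    have hN1 : N - 1 + 1 = N := by omega
    rw [hK]
    calc N * M = (N - 1 + 1) * M := by rw [hN1]
      _ = M * (N - 1) + M := by ring
  have hsub : (2:ℤ)^K - ((2:ℤ)^M)^(N-1) * X = 4 * ((2:ℤ)^M)^(N-1) := by
    rw [h2K, hX]; ring
  have h2c : 4 * ((2:ℤ)^M)^(N-1) < 2 * (c:ℤ) := by linarith [hAbound, hkey, hsub]
  have h4 : (4:ℤ) * 2^(M-1) = 2 * 2^M := by
    have hM1 : M - 1 + 1 = M := by omega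
    conv_rhs => rw [← hM1]
    rw [pow_succ]
    ring
  have hfinal : (2:ℤ)^K < (c:ℤ) * 2^(M-1) := by
    have hpos : (0:ℤ) < 2^(M-1) := by positivity
    have hstep : 2 * ((2:ℤ)^K) < 2 * ((c:ℤ) * 2^(M-1)) := by
      calc 2 * ((2:ℤ)^K) = (4 * 2^(M-1)) * ((2:ℤ)^M)^(N-1) := by
            rw [h4, h2K]; ring
        _ = (4 * ((2:ℤ)^M)^(N-1)) * 2^(M-1) := by ring
        _ < (2 * (c:ℤ)) * 2^(M-1) := mul_lt_mul_of_pos_right h2c hpos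
        _ = 2 * ((c:ℤ) * 2^(M-1)) := by ring
    linarith
  rw [gt_iff_lt]
  unfold jointInf
  rw [← hc, div_lt_div_iff₀ (by positivity) (by positivity), one_mul]
  have : ((2:ℚ))^K < (c:ℚ) * 2^(M-1) := by exact_mod_cast hfinal
  exact this
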